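/- arXiv:2201.01260 — 3 statements merged into one kernel-verified Lean document; each statement's English description precedes it below -/
import Mathlib

section
/- Let v : ℝⁿ → ℝ be positively homogeneous of degree 1 and C² on ℝⁿ \ {0}. Define v̄ : ℝ^{n-1} → ℝ by v̄(y) = v(y, 1). Then for every y ∈ ℝ^{n-1}, the (n-1)-st elementary symmetric polynomial of the eigenvalues of D²v at (y,1) equals (1 + |y|²) · det D²v̄(y). -/
/-
Euler's relation makes the homogeneous point `x = (y, 1)` a kernel vector of the symmetric
Hessian `A = D²v(x)`. For a symmetric matrix with kernel vector `X`, `X_last = 1`, conjugating by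
the unimodular matrix whose last column is `X` kills the last row and column, so
`adj A = det(A') • X Xᵀ` with `A'` the upper-left block; hence `tr adj A = |X|² det A'`.
Finally `v̄ = v ∘ (· , 1)` is `v` composed with an affine map, so `D²v̄(y) = A'`.
-/

/-- The Hessian matrix of `v` at `x`. -/
noncomputable def hessianMatrix (n : ℕ) (v : EuclideanSpace ℝ (Fin n) → ℝ)
    (x : EuclideanSpace ℝ (Fin n)) : Matrix (Fin n) (Fin n) ℝ :=
  Matrix.of fun i j =>
    iteratedFDeriv ℝ 2 v x ![EuclideanSpace.single i 1, EuclideanSpace.single j 1]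

open Matrix

namespace Matrix

variable {R : Type*} [CommRing R] {m : ℕ}

theorem adjugate_eq_single_of_last_row_col_eq_zero
    (B : Matrix (Fin (m + 1)) (Fin (m + 1)) R) (hrow : ∀ j, B (Fin.last m) j = 0)
    (hcol : ∀ i, B i (Fin.last m) = 0) :
    B.adjugate = single (Fin.last m) (Fin.last m) (B.submatrix Fin.castSucc Fin.castSucc).det := by
  ext i j
  rw [adjugate_fin_succ_eq_det_submatrix, single_apply]
  by_cases hj : j = Fin.last m
  · by_cases hi : i = Fin.last m
    · subst hi hj
      simp [Fin.succAbove_last]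
    · obtain ⟨k, hk⟩ := Fin.exists_succAbove_eq (Ne.symm hi)
      rw [det_eq_zero_of_column_eq_zero k fun l => by simp [hk, hcol]]
      simp [Ne.symm hi]
  · obtain ⟨k, hk⟩ := Fin.exists_succAbove_eq (Ne.symm hj)
    rw [det_eq_zero_of_row_eq_zero k fun l => by simp [hk, hrow]]
    simp [Ne.symm hj]

theorem adjugate_eq_smul_vecMulVec_of_mulVec_eq_zero
    (A : Matrix (Fin (m + 1)) (Fin (m + 1)) R) (X : Fin (m + 1) → R) (hX : X (Fin.last m) = 1)
    (hAX : A *ᵥ X = 0) (hXA : X ᵥ* A = 0) :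
    A.adjugate = (A.submatrix Fin.castSucc Fin.castSucc).det • vecMulVec X X := by
  set P := (1 : Matrix (Fin (m + 1)) (Fin (m + 1)) R).updateCol (Fin.last m) X
  have hP : P.det = 1 := by
    rw [← cramer_apply, cramer_one]; exact hX
  have hPe : P *ᵥ Pi.single (Fin.last m) 1 = X := by
    ext i; simp [P]
  have hPe' : ∀ j : Fin m, P *ᵥ Pi.single j.castSucc 1 = Pi.single j.castSucc 1 := by
    intro j; ext i; simp [P, (Fin.castSucc_lt_last j).ne, one_apply, Pi.single_apply]
  set B := Pᵀ * A * P
  have hA : A.adjugate = P * B.adjugate * Pᵀ := by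
    simp only [B, adjugate_mul_distrib, ← Matrix.mul_assoc, mul_adjugate, hP]
    simp [Matrix.mul_assoc, adjugate_mul, hP]
  have hrow : ∀ j, B (Fin.last m) j = 0 := by
    intro j
    have : Pi.single (Fin.last m) 1 ᵥ* B = 0 := by
      simp only [B, ← vecMul_vecMul, vecMul_transpose, hPe, hXA, zero_vecMul]
    simpa using congrFun this j
  have hcol : ∀ i, B i (Fin.last m) = 0 := by
    intro i
    have : B *ᵥ Pi.single (Fin.last m) 1 = 0 := by
      simp only [B, ← mulVec_mulVec, hPe, hAX, mulVec_zero]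
    simpa using congrFun this i
  have hsub : B.submatrix Fin.castSucc Fin.castSucc = A.submatrix Fin.castSucc Fin.castSucc := by
    ext i j
    have : Pi.single i.castSucc 1 ⬝ᵥ (B *ᵥ Pi.single j.castSucc 1) =
        Pi.single i.castSucc 1 ⬝ᵥ (A *ᵥ Pi.single j.castSucc 1) := by
      simp only [B, ← mulVec_mulVec, hPe', dotProduct_mulVec _ Pᵀ, vecMul_transpose]
    simpa using this
  have hsingle (d : R) : single (Fin.last m) (Fin.last m) d =
      d • vecMulVec (Pi.single (Fin.last m) 1) (Pi.single (Fin.last m) 1) := by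
    rw [← single_eq_single_vecMulVec_single, smul_single, smul_eq_mul, mul_one]
  rw [hA, adjugate_eq_single_of_last_row_col_eq_zero B hrow hcol, hsub, hsingle,
    Matrix.mul_smul, Matrix.smul_mul, mul_vecMulVec, vecMulVec_mul, vecMul_transpose, hPe]

end Matrix

section Homogeneous

variable {E : Type*} [NormedAddCommGroup E] [NormedSpace ℝ E] {v : E → ℝ}

theorem HasFDerivAt.smul_of_homogeneous (hhom : ∀ t : ℝ, 0 < t → ∀ x, v (t • x) = t * v x)
    {L : E →L[ℝ] ℝ} {x : E} (h : HasFDerivAt v L x) {t : ℝ} (ht : 0 < t) :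
    HasFDerivAt v L (t • x) := by
  have hv : v = fun z => t * v (t⁻¹ • z) := by
    funext z
    rw [← hhom t ht, smul_inv_smul₀ ht.ne']
  have hscale : HasFDerivAt (fun z : E => t⁻¹ • z) (t⁻¹ • ContinuousLinearMap.id ℝ E) (t • x) :=
    (t⁻¹ • ContinuousLinearMap.id ℝ E).hasFDerivAt
  have h' : HasFDerivAt v L (t⁻¹ • t • x) := by rwa [inv_smul_smul₀ ht.ne']
  have hL : t • L.comp (t⁻¹ • ContinuousLinearMap.id ℝ E) = L := by
    ext z
    simp [ht.ne']
  rw [← hL, hv]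
  exact (h'.comp (t • x) hscale).const_mul t

theorem fderiv_fderiv_apply_self_eq_zero_of_homogeneous
    (hhom : ∀ t : ℝ, 0 < t → ∀ x, v (t • x) = t * v x) {x : E} (hv : DifferentiableAt ℝ v x)
    (hv' : DifferentiableAt ℝ (fderiv ℝ v) x) : fderiv ℝ (fderiv ℝ v) x x = 0 := by
  have hray : HasDerivAt (fun t : ℝ => fderiv ℝ v (t • x)) (fderiv ℝ (fderiv ℝ v) x x) 1 := by
    have hline : HasDerivAt (fun t : ℝ => t • x) x 1 := by
      simpa using (hasDerivAt_id (1 : ℝ)).smul_const x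
    have hderiv : HasFDerivAt (fderiv ℝ v) (fderiv ℝ (fderiv ℝ v) x) ((1 : ℝ) • x) := by
      rw [one_smul]; exact hv'.hasFDerivAt
    exact hderiv.comp_hasDerivAt (1 : ℝ) hline
  have hconst : (fun t : ℝ => fderiv ℝ v (t • x)) =ᶠ[nhds 1] fun _ => fderiv ℝ v x := by
    filter_upwards [eventually_gt_nhds one_pos] with t ht
    exact (hv.hasFDerivAt.smul_of_homogeneous hhom ht).fderiv
  exact hray.unique ((hasDerivAt_const _ _).congr_of_eventuallyEq hconst)

end Homogeneous

theorem ContinuousLinearMap.iteratedFDeriv_comp_right_of_contDiffOn {𝕜 E F G : Type*}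
    [NontriviallyNormedField 𝕜] [NormedAddCommGroup E] [NormedSpace 𝕜 E]
    [NormedAddCommGroup F] [NormedSpace 𝕜 F] [NormedAddCommGroup G] [NormedSpace 𝕜 G]
    {n : WithTop ℕ∞} (g : G →L[𝕜] E) {f : E → F} {s : Set E} (hs : IsOpen s)
    (hf : ContDiffOn 𝕜 n f s) {x : G} (hx : g x ∈ s) {i : ℕ} (hi : i ≤ n) :
    iteratedFDeriv 𝕜 i (f ∘ g) x =
      (iteratedFDeriv 𝕜 i f (g x)).compContinuousLinearMap fun _ => g := by
  have hs' : IsOpen (g ⁻¹' s) := hs.preimage g.continuous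
  have := g.iteratedFDerivWithin_comp_right hf hs.uniqueDiffOn hs'.uniqueDiffOn hx hi
  rwa [iteratedFDerivWithin_of_isOpen _ hs hx, iteratedFDerivWithin_of_isOpen _ hs' hx] at this

section Hessian

variable {n : ℕ} {v : EuclideanSpace ℝ (Fin n) → ℝ} {x : EuclideanSpace ℝ (Fin n)}

theorem hessianMatrix_apply (i j : Fin n) : hessianMatrix n v x i j =
    fderiv ℝ (fderiv ℝ v) x (EuclideanSpace.single i 1) (EuclideanSpace.single j 1) := by
  simp [hessianMatrix, iteratedFDeriv_two_apply]

theorem hessianMatrix_mulVec (w : Fin n → ℝ) : hessianMatrix n v x *ᵥ w =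
    fun i => fderiv ℝ (fderiv ℝ v) x (EuclideanSpace.single i 1) (WithLp.toLp 2 w) := by
  ext i
  conv_rhs => rw [← (EuclideanSpace.basisFun (Fin n) ℝ).sum_repr (WithLp.toLp 2 w)]
  simp [Matrix.mulVec, dotProduct, hessianMatrix_apply, mul_comm]

theorem hessianMatrix_transpose (h : IsSymmSndFDerivAt ℝ v x) :
    (hessianMatrix n v x)ᵀ = hessianMatrix n v x := by
  ext i j
  simp [hessianMatrix_apply, h (EuclideanSpace.single i 1)]

theorem hessianMatrix_mulVec_self_eq_zero
    (hhom : ∀ t : ℝ, 0 < t → ∀ x, v (t • x) = t * v x) (hv : ContDiffAt ℝ 2 v x) :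
    hessianMatrix n v x *ᵥ WithLp.ofLp x = 0 := by
  have hv' : DifferentiableAt ℝ (fderiv ℝ v) x :=
    (hv.fderiv_right (m := 1) le_rfl).differentiableAt one_ne_zero
  ext i
  simp only [hessianMatrix_mulVec, WithLp.toLp_ofLp]
  rw [hv.isSymmSndFDerivAt (by simp),
    fderiv_fderiv_apply_self_eq_zero_of_homogeneous hhom (hv.differentiableAt two_ne_zero) hv']
  rfl

end Hessian

noncomputable def snocZeroCLM (m : ℕ) :
    EuclideanSpace ℝ (Fin m) →L[ℝ] EuclideanSpace ℝ (Fin (m + 1)) :=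
  LinearMap.toContinuousLinearMap
    { toFun := fun z => WithLp.toLp 2 (Fin.snoc (WithLp.ofLp z) 0)
      map_add' := fun a b => by
        ext k
        refine Fin.lastCases ?_ (fun i => ?_) k <;> simp
      map_smul' := fun c a => by
        ext k
        refine Fin.lastCases ?_ (fun i => ?_) k <;> simp }

theorem snocZeroCLM_single {m : ℕ} (i : Fin m) :
    snocZeroCLM m (EuclideanSpace.single i 1) = EuclideanSpace.single i.castSucc 1 := by
  ext k
  refine Fin.lastCases ?_ (fun j => ?_) k
  · simp [snocZeroCLM, (Fin.castSucc_lt_last i).ne']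
  · simp [snocZeroCLM, Pi.single_apply]

theorem toLp_snoc_eq_snocZeroCLM_add {m : ℕ} (y : EuclideanSpace ℝ (Fin m)) (a : ℝ) :
    WithLp.toLp 2 (Fin.snoc (WithLp.ofLp y) a) =
      snocZeroCLM m y + WithLp.toLp 2 (Fin.snoc 0 a) := by
  ext k
  refine Fin.lastCases ?_ (fun i => ?_) k <;> simp [snocZeroCLM]

theorem hessianMatrix_comp_snoc {m : ℕ} {v : EuclideanSpace ℝ (Fin (m + 1)) → ℝ}
    {s : Set (EuclideanSpace ℝ (Fin (m + 1)))} (hs : IsOpen s) (hv : ContDiffOn ℝ 2 v s) (a : ℝ)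
    {y : EuclideanSpace ℝ (Fin m)} (hy : WithLp.toLp 2 (Fin.snoc (WithLp.ofLp y) a) ∈ s) :
    hessianMatrix m (fun z => v (WithLp.toLp 2 (Fin.snoc (WithLp.ofLp z) a))) y =
      (hessianMatrix (m + 1) v (WithLp.toLp 2 (Fin.snoc (WithLp.ofLp y) a))).submatrix
        Fin.castSucc Fin.castSucc := by
  set c : EuclideanSpace ℝ (Fin (m + 1)) := WithLp.toLp 2 (Fin.snoc 0 a)
  have hslice : (fun z => v (WithLp.toLp 2 (Fin.snoc (WithLp.ofLp z) a))) =
      (fun w => v (w + c)) ∘ snocZeroCLM m := by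
    funext z
    simp only [Function.comp_apply, toLp_snoc_eq_snocZeroCLM_add, c]
  have hvc : ContDiffOn ℝ 2 (fun w => v (w + c)) ((· + c) ⁻¹' s) :=
    hv.comp (contDiff_id.add contDiff_const).contDiffOn fun _ hw => hw
  rw [toLp_snoc_eq_snocZeroCLM_add] at hy ⊢
  ext i j
  rw [submatrix_apply, hessianMatrix, hessianMatrix, of_apply, of_apply, hslice,
    (snocZeroCLM m).iteratedFDeriv_comp_right_of_contDiffOn (hs.preimage (continuous_add_const c))
      hvc hy le_rfl, iteratedFDeriv_comp_add_right]
  have hbasis :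
      (fun k => snocZeroCLM m (![EuclideanSpace.single i 1, EuclideanSpace.single j 1] k)) =
        ![EuclideanSpace.single i.castSucc 1, EuclideanSpace.single j.castSucc 1] := by
    funext k
    fin_cases k <;> simp [snocZeroCLM_single]
  rw [ContinuousMultilinearMap.compContinuousLinearMap_apply, hbasis]

theorem sigma_nsub1_eq_det_slice (m : ℕ) (v : EuclideanSpace ℝ (Fin (m + 1)) → ℝ)
    (hhom : ∀ t : ℝ, 0 < t → ∀ x, v (t • x) = t * v x)
    (hreg : ContDiffOn ℝ 2 v {(0 : EuclideanSpace ℝ (Fin (m + 1)))}ᶜ)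
    (vbar : EuclideanSpace ℝ (Fin m) → ℝ)
    (hvbar : ∀ y : EuclideanSpace ℝ (Fin m), vbar y = v (WithLp.toLp 2 (Fin.snoc (WithLp.ofLp y) 1)))
    (y : EuclideanSpace ℝ (Fin m)) :
    (hessianMatrix (m + 1) v (WithLp.toLp 2 (Fin.snoc (WithLp.ofLp y) 1))).adjugate.trace
      = (1 + ‖y‖ ^ 2) * (hessianMatrix m vbar y).det := by
  set x : EuclideanSpace ℝ (Fin (m + 1)) := WithLp.toLp 2 (Fin.snoc (WithLp.ofLp y) 1)
  have hx : x ≠ 0 := fun h => by simpa [x] using congrArg (· (Fin.last m)) h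
  have hv : ContDiffAt ℝ 2 v x := hreg.contDiffAt (isOpen_compl_singleton.mem_nhds hx)
  have hker := hessianMatrix_mulVec_self_eq_zero hhom hv
  have hker' : WithLp.ofLp x ᵥ* hessianMatrix (m + 1) v x = 0 := by
    rw [← mulVec_transpose, hessianMatrix_transpose (hv.isSymmSndFDerivAt (by simp)), hker]
  have hnorm : WithLp.ofLp x ⬝ᵥ WithLp.ofLp x = 1 + ‖y‖ ^ 2 := by
    rw [EuclideanSpace.real_norm_sq_eq]
    simp [x, dotProduct, Fin.sum_univ_castSucc, add_comm, sq]
  obtain rfl : vbar = fun z => v (WithLp.toLp 2 (Fin.snoc (WithLp.ofLp z) 1)) := funext hvbar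
  rw [hessianMatrix_comp_snoc isOpen_compl_singleton hreg 1 hx,
    adjugate_eq_smul_vecMulVec_of_mulVec_eq_zero _ _ (by simp [x]) hker hker', trace_smul,
    trace_vecMulVec, hnorm, smul_eq_mul, mul_comm]
end

section
/- For α ∉ [0,1] with α < k² for some nonzero integer k, the function u(r,θ) = r^α cos(kθ) on ℝ² \ {0} (in polar coordinates) changes sign and has nowhere vanishing Hessian determinant, i.e. det D²u(x) ≠ 0 for all x ≠ 0. -/
open Complex ContinuousLinearMap
set_option maxHeartbeats 1600000

/-- `a ↦ b ↦ (a*b).re` as a continuous bilinear map. -/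
noncomputable def remulL : ℂ →L[ℝ] ℂ →L[ℝ] ℝ :=
  LinearMap.mkContinuous₂
    (LinearMap.mk₂ ℝ (fun a b => (a * b).re)
      (fun a a' b => by simp [add_mul])
      (fun s a b => by simp [Complex.real_smul]; ring)
      (fun a b b' => by simp [mul_add])
      (fun s a b => by simp [Complex.real_smul]; ring))
    1 (fun a b => by
      simp only [LinearMap.mk₂_apply, one_mul]
      calc |(a*b).re| ≤ ‖a*b‖ := Complex.abs_re_le_norm _
        _ = ‖a‖ * ‖b‖ := by simp)

@[simp] lemma remulL_apply (a b : ℂ) : remulL a b = (a * b).re := rfl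

noncomputable def Fc (γ : ℝ) (k : ℤ) (z : ℂ) : ℝ := Complex.normSq z ^ γ * (z ^ k).re

noncomputable def gradc (γ : ℝ) (k : ℤ) (z : ℂ) : ℂ :=
  (2 * γ * Complex.normSq z ^ (γ - 1) * (z ^ k).re) • (starRingEnd ℂ) z
  + (Complex.normSq z ^ γ : ℝ) • ((k : ℂ) * z ^ (k - 1))

/-- derivative of `normSq`. -/
lemma hasFDerivAt_normSq' (z : ℂ) :
    HasFDerivAt Complex.normSq ((2:ℝ) • remulL ((starRingEnd ℂ) z)) z := by
  have hre : HasFDerivAt (fun y : ℂ => y.re) (Complex.reCLM : ℂ →L[ℝ] ℝ) z :=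
    Complex.reCLM.hasFDerivAt
  have him : HasFDerivAt (fun y : ℂ => y.im) (Complex.imCLM : ℂ →L[ℝ] ℝ) z :=
    Complex.imCLM.hasFDerivAt
  have h : HasFDerivAt (fun y : ℂ => y.re * y.re + y.im * y.im) _ z := (hre.mul hre).add (him.mul him)
  have heq : (fun y : ℂ => y.re * y.re + y.im * y.im) = Complex.normSq := by
    funext y; simp [Complex.normSq_apply]
  rw [heq] at h
  refine h.congr_fderiv ?_
  ext v
  simp [Complex.mul_re]
  ring

/-- derivative of `normSq ^ p`. -/
lemma hasFDerivAt_normSq_rpow (p : ℝ) {z : ℂ} (hz : z ≠ 0) :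
    HasFDerivAt (fun y => Complex.normSq y ^ p)
      ((2 * p * Complex.normSq z ^ (p - 1)) • remulL ((starRingEnd ℂ) z)) z := by
  have hS : Complex.normSq z ≠ 0 := by simpa using hz
  have h := (Real.hasDerivAt_rpow_const (x := Complex.normSq z) (p := p)
    (Or.inl hS)).comp_hasFDerivAt z (hasFDerivAt_normSq' z)
  refine h.congr_fderiv ?_
  ext v
  simp
  ring

/-- derivative of `(y^k).re`. -/
lemma hasFDerivAt_zpow_re (k : ℤ) {z : ℂ} (hz : z ≠ 0) :
    HasFDerivAt (fun y : ℂ => (y ^ k).re) (remulL ((k : ℂ) * z ^ (k - 1))) z := by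
  have h1 : HasDerivAt (fun y : ℂ => y ^ k) ((k : ℂ) * z ^ (k - 1)) z :=
    hasDerivAt_zpow k z (Or.inl hz)
  have h2 := (Complex.reCLM : ℂ →L[ℝ] ℝ).hasFDerivAt.comp z
    (h1.hasFDerivAt.restrictScalars ℝ)
  refine h2.congr_fderiv ?_
  ext v
  simp [mul_comm]

lemma hasFDerivAt_Fc (γ : ℝ) (k : ℤ) {z : ℂ} (hz : z ≠ 0) :
    HasFDerivAt (Fc γ k) (remulL (gradc γ k z)) z := by
  have h := (hasFDerivAt_normSq_rpow γ hz).mul (hasFDerivAt_zpow_re k hz)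
  refine h.congr_fderiv ?_
  ext v
  simp [gradc, add_mul, Complex.real_smul, Complex.mul_re, Complex.mul_im]
  ring

lemma hasFDerivAt_gradc (γ : ℝ) (k : ℤ) {z : ℂ} (hz : z ≠ 0) :
    ∃ Φ : ℂ →L[ℝ] ℂ, HasFDerivAt (gradc γ k) Φ z ∧ ∀ v : ℂ,
      Φ v = (4*γ*(γ-1) * Complex.normSq z ^ (γ-2) * ((starRingEnd ℂ) z * v).re * (z^k).re
               + 2*γ*Complex.normSq z ^ (γ-1) * (((k:ℂ) * z^(k-1)) * v).re) • (starRingEnd ℂ) z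
        + (2*γ*Complex.normSq z ^ (γ-1) * (z^k).re) • (starRingEnd ℂ) v
        + (2*γ*Complex.normSq z ^ (γ-1) * ((starRingEnd ℂ) z * v).re) • ((k:ℂ) * z^(k-1))
        + (Complex.normSq z ^ γ : ℝ) • ((k:ℂ) * ((k:ℂ)-1) * z^(k-2) * v) := by
  have hconj : HasFDerivAt (fun y : ℂ => (starRingEnd ℂ) y)
      (Complex.conjCLE.toContinuousLinearMap) z :=
    Complex.conjCLE.toContinuousLinearMap.hasFDerivAt
  have hf1 := ((hasFDerivAt_normSq_rpow (γ-1) hz).mul (hasFDerivAt_zpow_re k hz)).const_mul (2*γ)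
  have hterm1 := hf1.smul hconj
  have hg2 : HasFDerivAt (fun y : ℂ => (k:ℂ) * y^(k-1))
      ((((k:ℂ) * (((k:ℤ)-1 : ℤ) : ℂ) * z^(k-1-1)) • (1 : ℂ →L[ℂ] ℂ)).restrictScalars ℝ) z := by
    have h1 : HasDerivAt (fun y : ℂ => y ^ (k-1)) ((((k:ℤ)-1 : ℤ) : ℂ) * z ^ (k-1-1)) z :=
      hasDerivAt_zpow (k-1) z (Or.inl hz)
    have h2 := (h1.const_mul (k:ℂ)).hasFDerivAt.restrictScalars ℝ
    refine h2.congr_fderiv ?_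
    ext v
    simp
    ring
  have hterm2 := (hasFDerivAt_normSq_rpow γ hz).smul hg2
  have h := hterm1.add hterm2
  refine ⟨_, h.congr_of_eventuallyEq (Filter.Eventually.of_forall fun y => by
    simp [gradc, mul_assoc]), fun v => ?_⟩
  have hk2 : z ^ (k-1-1) = z ^ (k-2) := by congr 1; ring
  simp [hk2, Complex.real_smul]
  push_cast
  ring

noncomputable def Lc : EuclideanSpace ℝ (Fin 2) →L[ℝ] ℂ :=
  (EuclideanSpace.proj 0).smulRight 1 + (EuclideanSpace.proj (1 : Fin 2)).smulRight Complex.I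

@[simp] lemma Lc_apply (x : EuclideanSpace ℝ (Fin 2)) :
    Lc x = (x 0 : ℂ) + (x 1 : ℂ) * Complex.I := by
  simp [Lc, Complex.real_smul]

lemma Lc_ne_zero {x : EuclideanSpace ℝ (Fin 2)} (hx : x ≠ 0) : Lc x ≠ 0 := by
  intro h
  apply hx
  rw [Lc_apply] at h
  have h0 : x 0 = 0 ∧ x 1 = 0 := by
    constructor
    · simpa using congrArg Complex.re h
    · simpa using congrArg Complex.im h
  ext i
  fin_cases i
  · exact h0.1
  · exact h0.2

lemma norm_eq_abs_Lc (x : EuclideanSpace ℝ (Fin 2)) : ‖x‖ = ‖Lc x‖ := by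
  rw [Lc_apply, EuclideanSpace.norm_eq, Complex.norm_def, Complex.normSq_add_mul_I]
  simp [Fin.sum_univ_two, Real.sqrt_eq_iff_eq_sq, sq_abs]

lemma zpow_re_polar {z : ℂ} (hz : z ≠ 0) (k : ℤ) :
    (z ^ k).re = ‖z‖ ^ k * Real.cos (k * Complex.arg z) := by
  conv_lhs => rw [← Complex.norm_mul_exp_arg_mul_I z]
  rw [mul_zpow, ← Complex.exp_int_mul, ← Complex.ofReal_zpow]
  have h3 : ((k : ℂ)) * ((Complex.arg z : ℂ) * Complex.I)
      = (((k : ℝ) * Complex.arg z : ℝ) : ℂ) * Complex.I := by push_cast; ring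
  rw [h3, Complex.re_ofReal_mul, Complex.exp_ofReal_mul_I_re]

lemma u_eq_Fc (α : ℝ) (k : ℤ) (x : EuclideanSpace ℝ (Fin 2)) (hx : x ≠ 0) :
    ‖x‖ ^ α * Real.cos ((k : ℝ) * Complex.arg ((x 0 : ℂ) + (x 1 : ℂ) * Complex.I))
      = Fc ((α - k)/2) k (Lc x) := by
  have hz : Lc x ≠ 0 := Lc_ne_zero hx
  have habs : 0 < ‖Lc x‖ := by simpa using hz
  rw [Fc, ← Lc_apply, norm_eq_abs_Lc, zpow_re_polar hz]
  have h1 : Complex.normSq (Lc x) ^ ((α - (k:ℝ))/2) = ‖Lc x‖ ^ (α - (k:ℝ)) := by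
    rw [← Complex.sq_norm, ← Real.rpow_natCast ‖Lc x‖ 2,
      ← Real.rpow_mul habs.le]
    congr 1
    push_cast; ring
  have h2 : ‖Lc x‖ ^ (k : ℤ) = ‖Lc x‖ ^ ((k : ℤ) : ℝ) := by
    rw [Real.rpow_intCast]
  rw [h1, h2, ← mul_assoc, ← Real.rpow_add habs]
  norm_num

lemma det_entries_ne_zero (α : ℝ) (k : ℤ) (hk : k ≠ 0) (hα : α ∉ Set.Icc (0:ℝ) 1)
    (hαk : α < (k:ℝ)^2) {z : ℂ} (hz : z ≠ 0) (E : ℂ → ℂ)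
    (hE : ∀ v : ℂ,
      E v = (4*((α-(k:ℝ))/2)*(((α-(k:ℝ))/2)-1) * Complex.normSq z ^ (((α-(k:ℝ))/2)-2)
               * ((starRingEnd ℂ) z * v).re * (z^k).re
               + 2*((α-(k:ℝ))/2)*Complex.normSq z ^ (((α-(k:ℝ))/2)-1)
               * (((k:ℂ) * z^(k-1)) * v).re) • (starRingEnd ℂ) z
        + (2*((α-(k:ℝ))/2)*Complex.normSq z ^ (((α-(k:ℝ))/2)-1) * (z^k).re) • (starRingEnd ℂ) v
        + (2*((α-(k:ℝ))/2)*Complex.normSq z ^ (((α-(k:ℝ))/2)-1) * ((starRingEnd ℂ) z * v).re)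
            • ((k:ℂ) * z^(k-1))
        + (Complex.normSq z ^ ((α-(k:ℝ))/2) : ℝ) • ((k:ℂ) * ((k:ℂ)-1) * z^(k-2) * v)) :
    (E 1).re * (E Complex.I * Complex.I).re - (E 1 * Complex.I).re * (E Complex.I).re ≠ 0 := by
  set S := Complex.normSq z with hSdef
  have hS : 0 < S := Complex.normSq_pos.mpr hz
  set a := z.re with ha
  set b := z.im with hb
  set C := (z^(k-2)).re with hC
  set D := (z^(k-2)).im with hD
  set t := S ^ (((α-(k:ℝ))/2)-2) with ht
  have hz1 : z^(k-1) = z^(k-2) * z := by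
    rw [← zpow_add_one₀ hz]; congr 1; ring
  have hzk : z^k = z^(k-2) * z * z := by
    rw [← zpow_add_one₀ hz, ← zpow_add_one₀ hz]; congr 1; ring
  have ht1 : S ^ (((α-(k:ℝ))/2)-1) = t * S := by
    rw [show ((α-(k:ℝ))/2)-1 = (((α-(k:ℝ))/2)-2)+1 by ring, Real.rpow_add_one hS.ne']
  have ht2 : S ^ ((α-(k:ℝ))/2) = t * S * S := by
    rw [show ((α-(k:ℝ))/2) = ((((α-(k:ℝ))/2)-2)+1)+1 by ring, Real.rpow_add_one hS.ne',
      Real.rpow_add_one hS.ne']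
  have hSab : S = a*a + b*b := by rw [hSdef, Complex.normSq_apply]
  have hCD : 0 < C^2 + D^2 := by
    have hzz : z^(k-2) ≠ 0 := zpow_ne_zero _ hz
    have := Complex.normSq_pos.mpr hzz
    rw [Complex.normSq_apply] at this
    nlinarith [this]
  set P := C*(a*a - b*b) - D*(2*a*b) with hP
  set Q := D*(a*a - b*b) + C*(2*a*b) with hQ
  have hPQ : 0 < P^2 + Q^2 := by
    have : P^2 + Q^2 = (C^2+D^2)*(a*a+b*b)^2 := by rw [hP, hQ]; ring
    rw [this]
    have hS' : (0:ℝ) < (a*a+b*b)^2 := by nlinarith [hSab ▸ hS]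
    exact mul_pos hCD hS'
  have hdet : (E 1).re * (E Complex.I * Complex.I).re - (E 1 * Complex.I).re * (E Complex.I).re
      = t^2 * (a*a+b*b)^2 * ((α*(α-1)*(α-(k:ℝ)^2)) * P^2 - ((k:ℝ)^2*(α-1)^2) * Q^2) := by
    rw [hE 1, hE Complex.I, hzk, hz1, ht1, ht2, hSab, hP, hQ]
    simp only [Complex.real_smul, Complex.mul_re, Complex.mul_im, Complex.add_re, Complex.add_im,
      Complex.sub_re, Complex.sub_im, Complex.ofReal_re, Complex.ofReal_im, Complex.conj_re,
      Complex.conj_im, Complex.I_re, Complex.I_im, Complex.one_re, Complex.one_im,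
      Complex.intCast_re, Complex.intCast_im]
    ring
  rw [hdet]
  have hα' : α < 0 ∨ 1 < α := by
    by_contra h
    push_neg at h
    exact hα (Set.mem_Icc.mpr h)
  have h01 : 0 < α * (α - 1) := by rcases hα' with h | h <;> nlinarith
  have hM : α*(α-1)*(α-(k:ℝ)^2) < 0 := mul_neg_of_pos_of_neg h01 (by linarith)
  have hN : 0 < (k:ℝ)^2*(α-1)^2 := by
    have hk' : (k:ℝ) ≠ 0 := Int.cast_ne_zero.mpr hk
    have hα1 : α - 1 ≠ 0 := by rcases hα' with h | h <;> intro hh <;> nlinarith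
    positivity
  have hfactor : (α*(α-1)*(α-(k:ℝ)^2)) * P^2 - ((k:ℝ)^2*(α-1)^2) * Q^2 < 0 := by
    rcases eq_or_ne P 0 with h | h
    · have hQ2 : 0 < Q^2 := by nlinarith [sq_nonneg P]
      nlinarith
    · have hP2 : 0 < P^2 := by positivity
      nlinarith [sq_nonneg Q]
  have ht0 : (0:ℝ) < t := Real.rpow_pos_of_pos hS _
  have hSab2 : (0:ℝ) < (a*a+b*b)^2 := by nlinarith [hSab ▸ hS]
  have : t^2 * (a*a+b*b)^2 * ((α*(α-1)*(α-(k:ℝ)^2)) * P^2 - ((k:ℝ)^2*(α-1)^2) * Q^2) < 0 := by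
    apply mul_neg_of_pos_of_neg _ hfactor
    positivity
  exact ne_of_lt this

theorem homogeneous_sign_changing_example (α : ℝ) (k : ℤ) (hk : k ≠ 0)
    (hα : α ∉ Set.Icc (0 : ℝ) 1) (hαk : α < (k : ℝ) ^ 2)
    (u : EuclideanSpace ℝ (Fin 2) → ℝ)
    (hu : ∀ x : EuclideanSpace ℝ (Fin 2),
      u x = ‖x‖ ^ α * Real.cos ((k : ℝ) * Complex.arg ((x 0 : ℂ) + (x 1 : ℂ) * Complex.I))) :
    (∃ x : EuclideanSpace ℝ (Fin 2), x ≠ 0 ∧ 0 < u x) ∧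
    (∃ x : EuclideanSpace ℝ (Fin 2), x ≠ 0 ∧ u x < 0) ∧
    (∀ x : EuclideanSpace ℝ (Fin 2), x ≠ 0 → (hessianMatrix 2 u x).det ≠ 0) := by
  refine ⟨?_, ?_, ?_⟩
  · refine ⟨EuclideanSpace.single 0 (1:ℝ), ?_, ?_⟩
    · intro h
      have := congrArg (fun f : EuclideanSpace ℝ (Fin 2) => f 0) h
      simp [EuclideanSpace.single_apply] at this
    · rw [hu]
      simp [EuclideanSpace.single_apply, EuclideanSpace.norm_single]
  · set θ : ℝ := Real.pi / |(k : ℝ)| with hθ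
    have hkr : (1:ℝ) ≤ |(k : ℝ)| := by
      have : (1:ℤ) ≤ |k| := Int.one_le_abs (by omega)
      calc (1:ℝ) ≤ (|k| : ℤ) := by exact_mod_cast this
        _ = |(k:ℝ)| := by push_cast; rfl
    have hθpos : 0 < θ := by positivity
    have hθle : θ ≤ Real.pi := by
      rw [hθ]
      exact div_le_self Real.pi_pos.le hkr
    set p : EuclideanSpace ℝ (Fin 2) := (WithLp.equiv 2 _).symm ![Real.cos θ, Real.sin θ] with hp
    have hp0 : p 0 = Real.cos θ := rfl
    have hp1 : p 1 = Real.sin θ := rfl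
    have hnorm : ‖p‖ = 1 := by
      rw [EuclideanSpace.norm_eq, Fin.sum_univ_two, hp0, hp1]
      simp [Real.cos_sq_add_sin_sq]
    refine ⟨p, ?_, ?_⟩
    · intro h; rw [h] at hnorm; simp at hnorm
    · rw [hu, hp0, hp1, hnorm]
      have harg : Complex.arg ((Real.cos θ : ℂ) + (Real.sin θ : ℂ) * Complex.I) = θ := by
        rw [Complex.ofReal_cos, Complex.ofReal_sin]
        exact Complex.arg_cos_add_sin_mul_I ⟨by linarith [Real.pi_pos], hθle⟩
      rw [harg, Real.one_rpow, one_mul]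
      have hcos : Real.cos ((k : ℝ) * θ) = -1 := by
        have hk0 : (k:ℝ) ≠ 0 := Int.cast_ne_zero.mpr hk
        rcases lt_or_gt_of_ne hk0 with h | h
        · rw [hθ, abs_of_neg h]
          rw [show (k:ℝ) * (Real.pi / -(k:ℝ))
            = -Real.pi by rw [div_neg, mul_neg, mul_div_assoc', mul_comm, mul_div_assoc,
              div_self hk0, mul_one]]
          simp [Real.cos_pi]
        · rw [hθ, abs_of_pos h]
          rw [show (k:ℝ) * (Real.pi / (k:ℝ)) = Real.pi by field_simp]
          exact Real.cos_pi
      rw [hcos]; norm_num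
  · intro x hx
    have hz : Lc x ≠ 0 := Lc_ne_zero hx
    set γ : ℝ := (α - (k:ℝ))/2 with hγ
    -- first derivative in a neighborhood
    have hfd : ∀ y : EuclideanSpace ℝ (Fin 2), y ≠ 0 →
        HasFDerivAt u ((remulL (gradc γ k (Lc y))).comp Lc) y := by
      intro y hy
      have h1 : HasFDerivAt (fun w => Fc γ k (Lc w)) ((remulL (gradc γ k (Lc y))).comp Lc) y :=
        (hasFDerivAt_Fc γ k (Lc_ne_zero hy)).comp y Lc.hasFDerivAt
      refine h1.congr_of_eventuallyEq ?_
      filter_upwards [isOpen_ne.eventually_mem hy] with w hw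
      rw [hu w, u_eq_Fc α k w hw]
    -- T : ℂ →L[ℝ] (E →L[ℝ] ℝ), T c = (remulL c).comp Lc
    set T : ℂ →L[ℝ] (EuclideanSpace ℝ (Fin 2) →L[ℝ] ℝ) :=
      ((ContinuousLinearMap.compL ℝ (EuclideanSpace ℝ (Fin 2)) ℂ ℝ).flip Lc).comp remulL with hT
    have hfu : fderiv ℝ u =ᶠ[nhds x] fun y => T (gradc γ k (Lc y)) := by
      filter_upwards [isOpen_ne.eventually_mem hx] with y hy
      rw [(hfd y hy).fderiv]
      rfl
    obtain ⟨Φ, hΦ, hΦv⟩ := hasFDerivAt_gradc γ k hz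
    have hsec : HasFDerivAt (fderiv ℝ u) (T.comp (Φ.comp Lc)) x := by
      have h2 : HasFDerivAt (fun y => T (gradc γ k (Lc y))) (T.comp (Φ.comp Lc)) x :=
        T.hasFDerivAt.comp x (hΦ.comp x Lc.hasFDerivAt)
      exact h2.congr_of_eventuallyEq hfu
    have hD2 : fderiv ℝ (fderiv ℝ u) x = T.comp (Φ.comp Lc) := hsec.fderiv
    have hL0 : Lc (EuclideanSpace.single (0 : Fin 2) (1:ℝ)) = 1 := by
      simp [EuclideanSpace.single_apply]
    have hL1 : Lc (EuclideanSpace.single (1 : Fin 2) (1:ℝ)) = Complex.I := by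
      simp [EuclideanSpace.single_apply]
    have hentry : ∀ i j : Fin 2, hessianMatrix 2 u x i j
        = ((Φ (Lc (EuclideanSpace.single i 1))) * (Lc (EuclideanSpace.single j 1))).re := by
      intro i j
      show iteratedFDeriv ℝ 2 u x ![EuclideanSpace.single i 1, EuclideanSpace.single j 1]
        = _
      rw [iteratedFDeriv_two_apply]
      simp only [Matrix.cons_val_zero, Matrix.cons_val_one, Matrix.head_cons]
      rw [hD2]
      simp only [hT, ContinuousLinearMap.comp_apply, ContinuousLinearMap.flip_apply,
        ContinuousLinearMap.compL_apply, remulL_apply]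
    rw [Matrix.det_fin_two]
    rw [hentry 0 0, hentry 0 1, hentry 1 0, hentry 1 1, hL0, hL1]
    simp only [mul_one]
    have := det_entries_ne_zero α k hk hα hαk hz (fun v => Φ v) (fun v => hΦv v)
    simpa using this
end

section
/- Let u = r^α f(ω) be positively homogeneous of degree α ∈ (0,1) and C² away from 0, with f > 0 at ω ∈ S^{n-1}. In geodesic normal coordinates at ω with the last direction radial, det D²u(ω) = α(α−1) f^{2−n} · det( f ∇²_{S^{n-1}} f + (1/α − 1) ∇_{S^{n-1}} f ⊗ ∇_{S^{n-1}} f + α f² I_{n-1} ). -/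
/-
Write `u = ‖x‖ ^ α * F x` with `F x = u (x / ‖x‖)` homogeneous of degree `0`. The product rule
expresses `D²u(ω)` through `F(ω) = u(ω)`, `DF(ω)` and `D²F(ω)`, and Euler's identity for `F`
(`DF(x) x = 0`, hence `D²F(x)(v, x) = -DF(x) v`) turns it, in a basis `b` ending with `ω`, into a
bordered matrix: tangential block `D²F + α u(ω) I`, border `(α - 1) DF`, corner `α (α - 1) u(ω)`.
Expanding the determinant through the Schur complement of the corner, scaled by `u(ω)`, gives
the formula.
-/

open scoped RealInnerProductSpace
open Filter Topology

theorem Matrix.det_eq_mul_det_schur_last {K : Type*} [Field K] {m : ℕ}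
    (M : Matrix (Fin (m + 1)) (Fin (m + 1)) K) (h : M (Fin.last m) (Fin.last m) ≠ 0) :
    M.det = M (Fin.last m) (Fin.last m) * (Matrix.of fun i j : Fin m =>
      M i.castSucc j.castSucc - M i.castSucc (Fin.last m) * M (Fin.last m) j.castSucc
        / M (Fin.last m) (Fin.last m)).det := by
  have hlast : Fin.natAdd m (0 : Fin 1) = Fin.last m := rfl
  have hcast (k : Fin m) : Fin.castAdd 1 k = k.castSucc := rfl
  let N := M.submatrix finSumFinEquiv finSumFinEquiv
  have hD : N.toBlocks₂₂.det = M (Fin.last m) (Fin.last m) := by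
    simp [N, Matrix.toBlocks₂₂, hlast]
  let : Invertible N.toBlocks₂₂.det := invertibleOfNonzero (hD ▸ h)
  let := N.toBlocks₂₂.invertibleOfDetInvertible
  calc M.det = N.det := (M.det_submatrix_equiv_self finSumFinEquiv).symm
    _ = _ := by
      rw [← N.fromBlocks_toBlocks, Matrix.det_fromBlocks₂₂, hD, Matrix.invOf_eq_nonsing_inv,
        Matrix.inv_subsingleton]
      congr 2
      ext i j
      simp [N, Matrix.toBlocks₁₁, Matrix.toBlocks₁₂, Matrix.toBlocks₂₁, Matrix.toBlocks₂₂, hlast,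
        Matrix.mul_apply, div_eq_mul_inv, mul_right_comm, hcast]

section SecondDerivative

variable {𝕜 E F : Type*} [NontriviallyNormedField 𝕜] [NormedAddCommGroup E] [NormedSpace 𝕜 E]
  [NormedAddCommGroup F] [NormedSpace 𝕜 F] {a b : E → 𝕜} {x : E}

theorem ContDiffAt.hasFDerivAt_fderiv {f : E → F} (hf : ContDiffAt 𝕜 2 f x) :
    HasFDerivAt (fderiv 𝕜 f) (fderiv 𝕜 (fderiv 𝕜 f) x) x :=
  ((hf.fderiv_right (m := 1) le_rfl).differentiableAt one_ne_zero).hasFDerivAt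

theorem fderiv_fderiv_mul_apply (ha : ContDiffAt 𝕜 2 a x) (hb : ContDiffAt 𝕜 2 b x) (v w : E) :
    fderiv 𝕜 (fderiv 𝕜 fun y => a y * b y) x v w
      = fderiv 𝕜 (fderiv 𝕜 a) x v w * b x + fderiv 𝕜 a x w * fderiv 𝕜 b x v
        + fderiv 𝕜 a x v * fderiv 𝕜 b x w + a x * fderiv 𝕜 (fderiv 𝕜 b) x v w := by
  have hfd : fderiv 𝕜 (fun y => a y * b y) =ᶠ[𝓝 x]
      fun y => a y • fderiv 𝕜 b y + b y • fderiv 𝕜 a y := by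
    filter_upwards [ha.eventually (by simp), hb.eventually (by simp)] with y hay hby
    exact fderiv_mul (hay.differentiableAt two_ne_zero) (hby.differentiableAt two_ne_zero)
  have hd : HasFDerivAt (fun y => a y • fderiv 𝕜 b y + b y • fderiv 𝕜 a y) _ x :=
    ((ha.differentiableAt two_ne_zero).hasFDerivAt.smul hb.hasFDerivAt_fderiv).add
    ((hb.differentiableAt two_ne_zero).hasFDerivAt.smul ha.hasFDerivAt_fderiv)
  rw [hfd.fderiv_eq, hd.fderiv]
  simp only [add_apply, smul_apply, ContinuousLinearMap.smulRight_apply, smul_eq_mul]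
  ring

end SecondDerivative

section NormRpow

variable {E : Type*} [NormedAddCommGroup E] [InnerProductSpace ℝ E] {x : E}

theorem hasFDerivAt_norm_rpow_of_ne_zero (p : ℝ) (hx : x ≠ 0) :
    HasFDerivAt (fun y : E => ‖y‖ ^ p) ((p * ‖x‖ ^ (p - 2)) • innerSL ℝ x) x := by
  convert ((hasStrictFDerivAt_norm_sq x).rpow_const (p := p / 2) (by simp [hx])).hasFDerivAt
    using 0
  simp_rw [← Real.rpow_natCast_mul (norm_nonneg _), ← Nat.cast_smul_eq_nsmul ℝ, smul_smul]
  ring_nf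

theorem fderiv_norm_rpow_of_ne_zero (p : ℝ) (hx : x ≠ 0) :
    fderiv ℝ (fun y : E => ‖y‖ ^ p) x = (p * ‖x‖ ^ (p - 2)) • innerSL ℝ x :=
  (hasFDerivAt_norm_rpow_of_ne_zero p hx).fderiv

theorem fderiv_fderiv_norm_rpow_apply (p : ℝ) (hx : x ≠ 0) (v w : E) :
    fderiv ℝ (fderiv ℝ fun y : E => ‖y‖ ^ p) x v w
      = p * (p - 2) * ‖x‖ ^ (p - 4) * ⟪x, v⟫ * ⟪x, w⟫ + p * ‖x‖ ^ (p - 2) * ⟪v, w⟫ := by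
  have hfd : fderiv ℝ (fun y : E => ‖y‖ ^ p) =ᶠ[𝓝 x]
      fun y => (p * ‖y‖ ^ (p - 2)) • innerSL ℝ y := by
    filter_upwards [isOpen_compl_singleton.mem_nhds hx] with y hy
    exact fderiv_norm_rpow_of_ne_zero p hy
  have hd : HasFDerivAt (fun y => (p * ‖y‖ ^ (p - 2)) • innerSL ℝ y) _ x :=
    ((hasFDerivAt_norm_rpow_of_ne_zero (p - 2) hx).const_mul p).smul (innerSL ℝ).hasFDerivAt
  rw [hfd.fderiv_eq, hd.fderiv]
  simp only [add_apply, smul_apply, ContinuousLinearMap.smulRight_apply, coe_innerSL_apply,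
    smul_eq_mul]
  rw [innerSL_apply_apply]
  ring_nf

end NormRpow

def IsPosHomogeneous {E : Type*} [AddCommGroup E] [Module ℝ E] (u : E → ℝ) (α : ℝ) : Prop :=
  ∀ t : ℝ, 0 < t → ∀ x, u (t • x) = t ^ α * u x

namespace IsPosHomogeneous

variable {E : Type*} [NormedAddCommGroup E] [NormedSpace ℝ E] {u : E → ℝ} {α : ℝ} {x : E}

theorem fderiv_apply_self (hu : IsPosHomogeneous u α) (hx : DifferentiableAt ℝ u x) :
    fderiv ℝ u x x = α * u x := by
  have hline : HasDerivAt (fun t : ℝ => u (t • x)) (fderiv ℝ u x x) 1 := by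
    have hsmul : HasDerivAt (fun t : ℝ => t • x) x 1 := by
      simpa using (hasDerivAt_id (1 : ℝ)).smul_const x
    exact HasFDerivAt.comp_hasDerivAt (x := 1) (by simpa using hx.hasFDerivAt) hsmul
  have hpow : HasDerivAt (fun t : ℝ => t ^ α * u x) (α * u x) 1 := by
    simpa using (Real.hasDerivAt_rpow_const (x := 1) (p := α) (Or.inl one_ne_zero)).mul_const (u x)
  refine hline.unique (hpow.congr_of_eventuallyEq ?_)
  filter_upwards [eventually_gt_nhds one_pos] with t ht using hu t ht x

theorem fderiv_fderiv_apply_self (hu : IsPosHomogeneous u α) (hx : ContDiffAt ℝ 2 u x) (v : E) :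
    fderiv ℝ (fderiv ℝ u) x v x = (α - 1) * fderiv ℝ u x v := by
  have hEuler : HasFDerivAt (fun y => fderiv ℝ u y y) (α • fderiv ℝ u x) x := by
    refine ((hx.differentiableAt two_ne_zero).hasFDerivAt.const_smul α).congr_of_eventuallyEq ?_
    filter_upwards [hx.eventually (by simp)] with y hy
    exact hu.fderiv_apply_self (hy.differentiableAt two_ne_zero)
  have hprod := hx.hasFDerivAt_fderiv.clm_apply (hasFDerivAt_id x)
  have := congr($(hprod.unique hEuler) v)
  simp only [ContinuousLinearMap.comp_id, id_eq, add_apply, ContinuousLinearMap.flip_apply,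
    smul_apply, smul_eq_mul] at this
  linarith

theorem fderiv_fderiv_apply_self_self (hu : IsPosHomogeneous u α) (h : ContDiffAt ℝ 2 u x) :
    fderiv ℝ (fderiv ℝ u) x x x = α * (α - 1) * u x := by
  rw [hu.fderiv_fderiv_apply_self h, hu.fderiv_apply_self (h.differentiableAt two_ne_zero)]
  ring

end IsPosHomogeneous

noncomputable def angularPart {E : Type*} [NormedAddCommGroup E] [NormedSpace ℝ E] (u : E → ℝ) :
    E → ℝ :=
  fun x => u (‖x‖⁻¹ • x)

section AngularPart

variable {E : Type*} [NormedAddCommGroup E] [InnerProductSpace ℝ E] {u : E → ℝ} {α : ℝ} {x ω : E}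

theorem isPosHomogeneous_angularPart (u : E → ℝ) : IsPosHomogeneous (angularPart u) 0 := by
  intro t ht x
  rcases eq_or_ne x 0 with rfl | hx
  · simp
  rw [Real.rpow_zero, one_mul, angularPart, angularPart, norm_smul, Real.norm_of_nonneg ht.le,
    smul_smul, mul_inv_rev, mul_assoc, inv_mul_cancel₀ ht.ne', mul_one]

theorem angularPart_of_norm_eq_one (hx : ‖x‖ = 1) : angularPart u x = u x := by
  simp [angularPart, hx]

theorem IsPosHomogeneous.norm_rpow_mul_angularPart (hu : IsPosHomogeneous u α) (hx : x ≠ 0) :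
    ‖x‖ ^ α * angularPart u x = u x := by
  have hnx : 0 < ‖x‖ := norm_pos_iff.mpr hx
  rw [angularPart, ← hu ‖x‖ hnx, smul_smul, mul_inv_cancel₀ hnx.ne', one_smul]

theorem ContDiffAt.angularPart {n : WithTop ℕ∞} (hu : ContDiffAt ℝ n u x) (hx : ‖x‖ = 1) :
    ContDiffAt ℝ n (angularPart u) x := by
  have hx0 : x ≠ 0 := by rintro rfl; simp at hx
  exact ContDiffAt.comp (f := fun y : E => ‖y‖⁻¹ • y) x (by simpa [hx])
    (((contDiffAt_norm ℝ hx0).inv (norm_ne_zero_iff.mpr hx0)).smul contDiffAt_id)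

end AngularPart

namespace IsPosHomogeneous

variable {E : Type*} [NormedAddCommGroup E] [InnerProductSpace ℝ E] {u : E → ℝ} {α : ℝ} {ω : E}

theorem fderiv_fderiv_apply_of_norm_eq_one (hu : IsPosHomogeneous u α) (hω : ‖ω‖ = 1)
    (h : ContDiffAt ℝ 2 u ω) (v w : E) :
    fderiv ℝ (fderiv ℝ u) ω v w = fderiv ℝ (fderiv ℝ (angularPart u)) ω v w
      + α * (⟪ω, v⟫ * fderiv ℝ (angularPart u) ω w + ⟪ω, w⟫ * fderiv ℝ (angularPart u) ω v)
      + α * ((α - 2) * ⟪ω, v⟫ * ⟪ω, w⟫ + ⟪v, w⟫) * u ω := by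
  have hω0 : ω ≠ 0 := by rintro rfl; simp at hω
  have hu_eq : (fun y => ‖y‖ ^ α * angularPart u y) =ᶠ[𝓝 ω] u := by
    filter_upwards [isOpen_compl_singleton.mem_nhds hω0] with y hy
    exact hu.norm_rpow_mul_angularPart hy
  have hN : ContDiffAt ℝ 2 (fun y : E => ‖y‖ ^ α) ω :=
    (contDiffAt_norm ℝ hω0).rpow_const_of_ne (norm_ne_zero_iff.mpr hω0)
  rw [← hu_eq.fderiv.fderiv_eq, fderiv_fderiv_mul_apply hN (h.angularPart hω),
    fderiv_fderiv_norm_rpow_apply α hω0, fderiv_norm_rpow_of_ne_zero α hω0,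
    angularPart_of_norm_eq_one hω]
  simp only [hω, Real.one_rpow, smul_apply, innerSL_apply_apply, smul_eq_mul, real_inner_comm w ω]
  ring

theorem fderiv_fderiv_apply_tangent_self {v : E} (hu : IsPosHomogeneous u α) (hω : ‖ω‖ = 1)
    (h : ContDiffAt ℝ 2 u ω) (hv : ⟪ω, v⟫ = 0) :
    fderiv ℝ (fderiv ℝ u) ω v ω = (α - 1) * fderiv ℝ (angularPart u) ω v := by
  have hF := (isPosHomogeneous_angularPart u).fderiv_fderiv_apply_self (h.angularPart hω) v
  rw [hu.fderiv_fderiv_apply_of_norm_eq_one hω h, hF, hv, real_inner_self_eq_norm_sq, hω,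
    real_inner_comm, hv]
  ring

theorem fderiv_fderiv_apply_self_tangent {v : E} (hu : IsPosHomogeneous u α) (hω : ‖ω‖ = 1)
    (h : ContDiffAt ℝ 2 u ω) (hv : ⟪ω, v⟫ = 0) :
    fderiv ℝ (fderiv ℝ u) ω ω v = (α - 1) * fderiv ℝ (angularPart u) ω v := by
  rw [h.isSymmSndFDerivAt (by simp [minSmoothness_of_isRCLikeNormedField]) ω v]
  exact hu.fderiv_fderiv_apply_tangent_self hω h hv

theorem fderiv_fderiv_apply_tangent_tangent {v w : E} (hu : IsPosHomogeneous u α) (hω : ‖ω‖ = 1)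
    (h : ContDiffAt ℝ 2 u ω) (hv : ⟪ω, v⟫ = 0) (hw : ⟪ω, w⟫ = 0) :
    fderiv ℝ (fderiv ℝ u) ω v w
      = fderiv ℝ (fderiv ℝ (angularPart u)) ω v w + α * ⟪v, w⟫ * u ω := by
  rw [hu.fderiv_fderiv_apply_of_norm_eq_one hω h, hv, hw]
  ring

end IsPosHomogeneous

theorem det_hessian_alpha_homogeneous_general (m : ℕ) (α : ℝ) (hα : α ∈ Set.Ioo (0 : ℝ) 1)
    (u : EuclideanSpace ℝ (Fin (m + 1)) → ℝ)
    (hreg : ContDiffOn ℝ 2 u {(0 : EuclideanSpace ℝ (Fin (m + 1)))}ᶜ)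
    (hhom : ∀ t : ℝ, 0 < t → ∀ x, u (t • x) = t ^ α * u x)
    (ω : EuclideanSpace ℝ (Fin (m + 1))) (hω : ‖ω‖ = 1) (hpos : 0 < u ω)
    -- `b` is an orthonormal basis whose last vector is the radial direction `ω`;
    -- the first `m` vectors give geodesic normal coordinates on the sphere at `ω`.
    (b : Fin (m + 1) → EuclideanSpace ℝ (Fin (m + 1)))
    (hb : Orthonormal ℝ b) (hblast : b (Fin.last m) = ω)
    -- `F` is the 0-homogeneous extension of `f := u|_{S^n⁻¹}`, so that the spherical
    -- gradient and Hessian of `f` at `ω` are those of `F` in the tangent directions.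
    (F : EuclideanSpace ℝ (Fin (m + 1)) → ℝ)
    (hF : ∀ x : EuclideanSpace ℝ (Fin (m + 1)), F x = u (‖x‖⁻¹ • x)) :
    Matrix.det (Matrix.of fun i j : Fin (m + 1) => iteratedFDeriv ℝ 2 u ω ![b i, b j])
      = α * (α - 1) * (u ω) ^ ((2 : ℝ) - (m + 1)) *
        Matrix.det (Matrix.of fun i j : Fin m =>
          u ω * iteratedFDeriv ℝ 2 F ω ![b i.castSucc, b j.castSucc]
            + (1 / α - 1) * ⟪gradient F ω, b i.castSucc⟫ * ⟪gradient F ω, b j.castSucc⟫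
            + α * (u ω) ^ 2 * (if i = j then 1 else 0)) := by
  obtain ⟨hα0, hα1⟩ := hα
  obtain rfl : F = angularPart u := funext hF
  replace hhom : IsPosHomogeneous u α := hhom
  have hu : ContDiffAt ℝ 2 u ω :=
    hreg.contDiffAt (isOpen_compl_singleton.mem_nhds (by rintro rfl; simp at hω))
  have hωb (i : Fin m) : ⟪ω, b i.castSucc⟫ = 0 :=
    hblast ▸ hb.2 (Fin.castSucc_lt_last i).ne'
  have hbb (i j : Fin m) : ⟪b i.castSucc, b j.castSucc⟫ = if i = j then 1 else 0 := by
    simpa using orthonormal_iff_ite.mp hb i.castSucc j.castSucc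
  have hcorner : α * (α - 1) * u ω ≠ 0 := by
    have : α - 1 ≠ 0 := by linarith
    positivity
  simp only [iteratedFDeriv_two_apply, Matrix.cons_val_zero, Matrix.cons_val_one,
    inner_gradient_left]
  rw [Matrix.det_eq_mul_det_schur_last _
    (by rwa [Matrix.of_apply, hblast, hhom.fderiv_fderiv_apply_self_self hu])]
  simp only [Matrix.of_apply, hblast, hhom.fderiv_fderiv_apply_self_self hu,
    hhom.fderiv_fderiv_apply_tangent_self hω hu (hωb _),
    hhom.fderiv_fderiv_apply_self_tangent hω hu (hωb _),
    hhom.fderiv_fderiv_apply_tangent_tangent hω hu (hωb _) (hωb _), hbb]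
  have hscale (A : Matrix (Fin m) (Fin m) ℝ) :
      α * (α - 1) * u ω * A.det = α * (α - 1) * u ω ^ ((2 : ℝ) - (m + 1)) * (u ω • A).det := by
    rw [Matrix.det_smul, Fintype.card_fin, ← Real.rpow_natCast, ← mul_assoc,
      mul_assoc _ (u ω ^ ((2 : ℝ) - (m + 1))), ← Real.rpow_add hpos,
      show (2 : ℝ) - (m + 1) + m = 1 by ring, Real.rpow_one]
  rw [hscale]
  congr 2
  ext i j
  simp only [Matrix.smul_apply, Matrix.of_apply, smul_eq_mul]
  field_simp
  ring

theorem det_hessian_alpha_homogeneous (m : ℕ) (hm : 1 ≤ m) (α : ℝ) (hα : α ∈ Set.Ioo (0 : ℝ) 1)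
    (u : EuclideanSpace ℝ (Fin (m + 1)) → ℝ)
    (hreg : ContDiffOn ℝ 2 u {(0 : EuclideanSpace ℝ (Fin (m + 1)))}ᶜ)
    (hhom : ∀ t : ℝ, 0 < t → ∀ x, u (t • x) = t ^ α * u x)
    (ω : EuclideanSpace ℝ (Fin (m + 1))) (hω : ‖ω‖ = 1) (hpos : 0 < u ω)
    -- `b` is an orthonormal basis whose last vector is the radial direction `ω`;
    -- the first `m` vectors give geodesic normal coordinates on the sphere at `ω`.
    (b : Fin (m + 1) → EuclideanSpace ℝ (Fin (m + 1)))
    (hb : Orthonormal ℝ b) (hblast : b (Fin.last m) = ω)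
    -- `F` is the 0-homogeneous extension of `f := u|_{S^n⁻¹}`, so that the spherical
    -- gradient and Hessian of `f` at `ω` are those of `F` in the tangent directions.
    (F : EuclideanSpace ℝ (Fin (m + 1)) → ℝ)
    (hF : ∀ x : EuclideanSpace ℝ (Fin (m + 1)), F x = u (‖x‖⁻¹ • x)) :
    Matrix.det (Matrix.of fun i j : Fin (m + 1) => iteratedFDeriv ℝ 2 u ω ![b i, b j])
      = α * (α - 1) * (u ω) ^ ((2 : ℝ) - (m + 1)) *
        Matrix.det (Matrix.of fun i j : Fin m =>
          u ω * iteratedFDeriv ℝ 2 F ω ![b i.castSucc, b j.castSucc]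
            + (1 / α - 1) * ⟪gradient F ω, b i.castSucc⟫ * ⟪gradient F ω, b j.castSucc⟫
            + α * (u ω) ^ 2 * (if i = j then 1 else 0)) :=
  det_hessian_alpha_homogeneous_general m α hα u hreg hhom ω hω hpos b hb hblast F hF
end
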